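/- arXiv:0903.0595 — 5 statements merged into one kernel-verified Lean document; each statement's English description precedes it below -/
import Mathlib

section
/- If f_1,...,f_m are concave nondecreasing functions on [0,∞)^2 (nondecreasing in each coordinate), and (P_1*,Q_1*),...,(P_m*,Q_m*) admit a common subgradient (k_p,k_q) for all f_i, with Σ P_i* = P and Σ Q_i* = Q, then for any nonnegative (P_l,Q_l) with Σ_l P_l ≤ P and Σ_l Q_l ≤ Q we have Σ_l f_l(P_l,Q_l) ≤ Σ_l f_l(P_l*,Q_l*). -/
/-! Monotonicity forces a subgradient to be nonnegative, and summing the subgradient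
inequalities bounds the total gain by `kp * (∑ Pₗ - P) + kq * (∑ Qₗ - Q) ≤ 0`. -/

open Finset

theorem subgradient_nonneg_of_monotone {g : ℝ → ℝ → ℝ} {p₀ q₀ kp kq : ℝ}
    (hp₀ : 0 ≤ p₀) (hq₀ : 0 ≤ q₀)
    (hmono : ∀ p p' q q', 0 ≤ p → p ≤ p' → 0 ≤ q → q ≤ q' → g p q ≤ g p' q')
    (hsub : ∀ p q, 0 ≤ p → 0 ≤ q → g p q - g p₀ q₀ ≤ kp * (p - p₀) + kq * (q - q₀)) :
    0 ≤ kp ∧ 0 ≤ kq := by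
  have hp := hsub (p₀ + 1) q₀ (by linarith) hq₀
  have hq := hsub p₀ (q₀ + 1) hp₀ (by linarith)
  have hgp := hmono p₀ (p₀ + 1) q₀ q₀ hp₀ (by linarith) hq₀ le_rfl
  have hgq := hmono p₀ p₀ q₀ (q₀ + 1) hp₀ le_rfl hq₀ (by linarith)
  constructor <;> linarith

theorem Finset.sum_sub_le_of_subgradient {ι : Type*} (s : Finset ι) (f : ι → ℝ → ℝ → ℝ)
    (p q p₀ q₀ : ι → ℝ) (kp kq : ℝ)
    (hsub : ∀ l ∈ s,
      f l (p l) (q l) - f l (p₀ l) (q₀ l) ≤ kp * (p l - p₀ l) + kq * (q l - q₀ l)) :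
    ∑ l ∈ s, f l (p l) (q l) - ∑ l ∈ s, f l (p₀ l) (q₀ l)
      ≤ kp * (∑ l ∈ s, p l - ∑ l ∈ s, p₀ l) + kq * (∑ l ∈ s, q l - ∑ l ∈ s, q₀ l) := by
  simp only [← sum_sub_distrib, mul_sum, ← sum_add_distrib]
  exact sum_le_sum hsub

theorem sum_le_of_common_subgradient_monotone_general {m : ℕ}
    (f : Fin m → ℝ → ℝ → ℝ)
    (hmono : ∀ l p p' q q', 0 ≤ p → p ≤ p' → 0 ≤ q → q ≤ q' →
      f l p q ≤ f l p' q')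
    (Pstar Qstar : Fin m → ℝ)
    (hPstar : ∀ l, 0 ≤ Pstar l) (hQstar : ∀ l, 0 ≤ Qstar l)
    (kp kq P Q : ℝ)
    (hsub : ∀ l, ∀ p q, 0 ≤ p → 0 ≤ q →
      f l p q - f l (Pstar l) (Qstar l) ≤ kp * (p - Pstar l) + kq * (q - Qstar l))
    (hsumP : ∑ l, Pstar l = P) (hsumQ : ∑ l, Qstar l = Q) :
    ∀ Pl Ql : Fin m → ℝ, (∀ l, 0 ≤ Pl l) → (∀ l, 0 ≤ Ql l) →
      (∑ l, Pl l) ≤ P → (∑ l, Ql l) ≤ Q →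
      ∑ l, f l (Pl l) (Ql l) ≤ ∑ l, f l (Pstar l) (Qstar l) := by
  intro Pl Ql hPl hQl hP hQ
  rcases isEmpty_or_nonempty (Fin m) with _ | ⟨⟨l₀⟩⟩
  · simp
  obtain ⟨hkp, hkq⟩ :=
    subgradient_nonneg_of_monotone (hPstar l₀) (hQstar l₀) (hmono l₀) (hsub l₀)
  have hgain := univ.sum_sub_le_of_subgradient f Pl Ql Pstar Qstar kp kq
    fun l _ => hsub l _ _ (hPl l) (hQl l)
  subst hsumP hsumQ
  linarith [mul_nonneg hkp (sub_nonneg.2 hP), mul_nonneg hkq (sub_nonneg.2 hQ)]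

/-- common-subgradient optimality for concave nondecreasing
functions on [0,∞)² with budgets Σ Pₗ ≤ P, Σ Qₗ ≤ Q. -/
theorem sum_le_of_common_subgradient_monotone {m : ℕ}
    (f : Fin m → ℝ → ℝ → ℝ)
    (hconc : ∀ l, ConcaveOn ℝ {x : ℝ × ℝ | 0 ≤ x.1 ∧ 0 ≤ x.2}
      (fun x => f l x.1 x.2))
    (hmono : ∀ l p p' q q', 0 ≤ p → p ≤ p' → 0 ≤ q → q ≤ q' →
      f l p q ≤ f l p' q')
    (Pstar Qstar : Fin m → ℝ)
    (hPstar : ∀ l, 0 ≤ Pstar l) (hQstar : ∀ l, 0 ≤ Qstar l)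
    (kp kq P Q : ℝ)
    (hsub : ∀ l, ∀ p q, 0 ≤ p → 0 ≤ q →
      f l p q - f l (Pstar l) (Qstar l) ≤ kp * (p - Pstar l) + kq * (q - Qstar l))
    (hsumP : ∑ l, Pstar l = P) (hsumQ : ∑ l, Qstar l = Q) :
    ∀ Pl Ql : Fin m → ℝ, (∀ l, 0 ≤ Pl l) → (∀ l, 0 ≤ Ql l) →
      (∑ l, Pl l) ≤ P → (∑ l, Ql l) ≤ Q →
      ∑ l, f l (Pl l) (Ql l) ≤ ∑ l, f l (Pstar l) (Qstar l) :=
  sum_le_of_common_subgradient_monotone_general f hmono Pstar Qstar hPstar hQstar kp kq P Q hsub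
    hsumP hsumQ
end

section
/- For positive reals a < c with a/c ≤ 1/4, setting w = 4a²/(√c - √a)², the value P*(w) = (√(c² + (4ac/w)(a+c)) - (2a+c))/(2a(a+c)) equals (√(ac) - 2a)/(2a²), the maximum power satisfying the symmetric noisy-interference condition. -/
/-!
Write `a = s²`, `c = t²`. At `k = 4s⁴/(t - s)²` the radicand of `P*` is the perfect square
`(t (s² - s t + t²) / s)²`, so the square root disappears and the claim becomes an identity
of rational functions in `s` and `t`.
-/

/-- The inverse of the marginal-rate function for a symmetric sub-channel. -/
noncomputable def Pstar (a c k : ℝ) : ℝ :=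
  (Real.sqrt (c ^ 2 + (4 * a * c / k) * (a + c)) - (2 * a + c)) / (2 * a * (a + c))

lemma Pstar_radicand_eq_sq {s : ℝ} (hs : s ≠ 0) (t : ℝ) :
    (t ^ 2) ^ 2 + (4 * s ^ 2 * t ^ 2 / (4 * (s ^ 2) ^ 2 / (t - s) ^ 2)) * (s ^ 2 + t ^ 2)
      = (t * (s ^ 2 - s * t + t ^ 2) / s) ^ 2 := by
  rw [div_div_eq_mul_div]
  field_simp
  ring

lemma Pstar_sq_sq {s t : ℝ} (hs : 0 < s) (ht : 0 ≤ t) :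
    Pstar (s ^ 2) (t ^ 2) (4 * (s ^ 2) ^ 2 / (t - s) ^ 2)
      = (s * t - 2 * s ^ 2) / (2 * (s ^ 2) ^ 2) := by
  have hquad : 0 ≤ s ^ 2 - s * t + t ^ 2 := by nlinarith [sq_nonneg (s - t)]
  have hroot : 0 ≤ t * (s ^ 2 - s * t + t ^ 2) / s := by positivity
  rw [Pstar, Pstar_radicand_eq_sq hs.ne', Real.sqrt_sq hroot]
  have hsum : s ^ 2 + t ^ 2 ≠ 0 := by positivity
  field_simp
  ring

theorem Pstar_at_w_general (a c : ℝ) (ha : 0 < a) (hac : a < c) :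
    Pstar a c (4 * a ^ 2 / (Real.sqrt c - Real.sqrt a) ^ 2)
      = (Real.sqrt (a * c) - 2 * a) / (2 * a ^ 2) := by
  have key := Pstar_sq_sq (Real.sqrt_pos.2 ha) (Real.sqrt_nonneg c)
  rwa [Real.sq_sqrt ha.le, Real.sq_sqrt (ha.trans hac).le, ← Real.sqrt_mul ha.le] at key

/-- at w = 4a²/(√c-√a)², P*(w) equals the maximum symmetric
noisy-interference power (√(ac)-2a)/(2a²). -/
theorem Pstar_at_w (a c : ℝ) (ha : 0 < a) (hac : a < c) (h : a / c ≤ 1 / 4) :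
    Pstar a c (4 * a ^ 2 / (Real.sqrt c - Real.sqrt a) ^ 2)
      = (Real.sqrt (a * c) - 2 * a) / (2 * a ^ 2) :=
  Pstar_at_w_general a c ha hac
end

section
/- Let 0 < a_i < c_i with a_i/c_i < 1/4 for i = 1,...,m, let w_i = 4a_i²/(√c_i - √a_i)², ŵ = max_i w_i, ĉ = max_i c_i, and define P_i*(k) = 0 if k ≥ c_i, and P_i*(k) = (√(c_i² + (4a_ic_i/k)(a_i+c_i)) - (2a_i+c_i))/(2a_i(a_i+c_i)) if w_i ≤ k < c_i. Then the total power function P(k) = Σ_i P_i*(k) is continuous and monotonically nonincreasing on [ŵ, ĉ], with P(ĉ) = 0; hence for every total power P ∈ [0, P(ŵ)] there exists k* ∈ [ŵ, ĉ] with Σ_i P_i*(k*) = P. -/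
open Set

/-!
Each allocation `Pᵢ*` is the composite of `k ↦ min k cᵢ` with the formula
`(√(cᵢ² + 4aᵢcᵢ(aᵢ + cᵢ)/k) - (2aᵢ + cᵢ)) / (2aᵢ(aᵢ + cᵢ))`, which is continuous and antitone
for `k > 0` and vanishes at `k = cᵢ` because `cᵢ² + 4aᵢ(aᵢ + cᵢ) = (2aᵢ + cᵢ)²`. The condition
`aᵢ/cᵢ < 1/4`, i.e. `√aᵢ < √cᵢ/2`, gives `0 < wᵢ < cᵢ`, so `[ŵ, ĉ]` is a nonempty interval of
positive reals; the intermediate value theorem then yields every total power in `[0, P(ŵ)]`.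
-/

theorem antitoneOn_finset_sum {ι α β : Type*} [Preorder α] [AddCommMonoid β] [PartialOrder β]
    [IsOrderedAddMonoid β] {s : Finset ι} {f : ι → α → β} {t : Set α}
    (hf : ∀ i ∈ s, AntitoneOn (f i) t) : AntitoneOn (fun x => ∑ i ∈ s, f i x) t :=
  fun _ hx _ hy hxy => Finset.sum_le_sum fun i hi => hf i hi hx hy hxy

namespace Waterfilling

noncomputable def power (a c k : ℝ) : ℝ :=
  (Real.sqrt (c ^ 2 + (4 * a * c / k) * (a + c)) - (2 * a + c)) / (2 * a * (a + c))

noncomputable def truncPower (a c k : ℝ) : ℝ :=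
  if c ≤ k then 0 else power a c k

variable {a c : ℝ}

theorem continuousOn_power (a c : ℝ) : ContinuousOn (power a c) (Ioi 0) := by
  unfold power
  refine ((Real.continuous_sqrt.comp_continuousOn ?_).sub continuousOn_const).div_const _
  exact continuousOn_const.add
    ((continuousOn_const.div continuousOn_id fun _ hk => ne_of_gt hk).mul continuousOn_const)

theorem antitoneOn_power (ha : 0 ≤ a) (hc : 0 ≤ c) : AntitoneOn (power a c) (Ioi 0) := by
  intro x hx y _ hxy
  have hx : (0 : ℝ) < x := hx
  unfold power
  gcongr

theorem power_self (ha : 0 ≤ a) (hc : 0 < c) : power a c c = 0 := by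
  have hsq : c ^ 2 + 4 * a * c / c * (a + c) = (2 * a + c) ^ 2 := by
    field_simp
    ring
  rw [power, hsq, Real.sqrt_sq (by positivity), sub_self, zero_div]

theorem truncPower_of_le {k : ℝ} (h : c ≤ k) : truncPower a c k = 0 :=
  if_pos h

theorem truncPower_eq_power_min (ha : 0 ≤ a) (hc : 0 < c) (k : ℝ) :
    truncPower a c k = power a c (min k c) := by
  by_cases h : c ≤ k
  · rw [truncPower_of_le h, min_eq_right h, power_self ha hc]
  · rw [truncPower, if_neg h, min_eq_left (not_le.1 h).le]

theorem mapsTo_min_Ioi (hc : 0 < c) : MapsTo (fun k => min k c) (Ioi 0) (Ioi 0) :=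
  fun _ hk => lt_min hk hc

theorem continuousOn_truncPower (ha : 0 ≤ a) (hc : 0 < c) :
    ContinuousOn (truncPower a c) (Ioi 0) := by
  rw [funext (truncPower_eq_power_min ha hc)]
  exact (continuousOn_power a c).comp (continuous_id.min continuous_const).continuousOn
    (mapsTo_min_Ioi hc)

theorem antitoneOn_truncPower (ha : 0 ≤ a) (hc : 0 < c) :
    AntitoneOn (truncPower a c) (Ioi 0) := by
  intro x hx y hy hxy
  simp only [truncPower_eq_power_min ha hc]
  exact antitoneOn_power ha hc.le (mapsTo_min_Ioi hc hx) (mapsTo_min_Ioi hc hy)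
    (min_le_min_right c hxy)

theorem weight_pos (ha : 0 < a) (hac : a < c) :
    0 < 4 * a ^ 2 / (Real.sqrt c - Real.sqrt a) ^ 2 := by
  have : 0 < Real.sqrt c - Real.sqrt a := sub_pos.2 (Real.sqrt_lt_sqrt ha.le hac)
  positivity

theorem weight_lt (ha : 0 < a) (h4 : 4 * a < c) :
    4 * a ^ 2 / (Real.sqrt c - Real.sqrt a) ^ 2 < c := by
  set s := Real.sqrt a
  set t := Real.sqrt c
  have hs : s ^ 2 = a := Real.sq_sqrt ha.le
  have ht : t ^ 2 = c := Real.sq_sqrt (by linarith)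
  have hs0 : 0 < s := Real.sqrt_pos.2 ha
  have hst : 2 * s < t := by nlinarith [Real.sqrt_nonneg c]
  -- `2s² < t²/2 < t(t - s)`, and squaring gives `4a² < c (√c - √a)²`
  have key : 2 * s ^ 2 < t * (t - s) := by nlinarith
  rw [div_lt_iff₀ (by nlinarith), ← hs, ← ht]
  nlinarith [mul_pos hs0 hs0]

end Waterfilling

open Waterfilling

/-- continuity and monotonicity of the water-filling total power
function k ↦ Σᵢ Pᵢ*(k) on [ŵ, ĉ], with P(ĉ) = 0, and surjectivity onto
[0, P(ŵ)]. -/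
theorem waterfilling_total_power {m : ℕ}
    (a c w : Fin m → ℝ)
    (ha : ∀ i, 0 < a i) (hac : ∀ i, a i < c i)
    (hratio : ∀ i, a i / c i < 1 / 4)
    (hw : ∀ i, w i = 4 * (a i) ^ 2 / (Real.sqrt (c i) - Real.sqrt (a i)) ^ 2)
    (what chat : ℝ)
    (hwhat : IsGreatest (Set.range w) what)
    (hchat : IsGreatest (Set.range c) chat)
    (Pstar : Fin m → ℝ → ℝ)
    (hPstar : ∀ i k, Pstar i k =
      if c i ≤ k then 0
      else (Real.sqrt ((c i) ^ 2 + (4 * a i * c i / k) * (a i + c i))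
              - (2 * a i + c i)) / (2 * a i * (a i + c i))) :
    ContinuousOn (fun k => ∑ i, Pstar i k) (Icc what chat) ∧
    AntitoneOn (fun k => ∑ i, Pstar i k) (Icc what chat) ∧
    (∑ i, Pstar i chat) = 0 ∧
    ∀ P ∈ Icc (0 : ℝ) (∑ i, Pstar i what),
      ∃ k ∈ Icc what chat, (∑ i, Pstar i k) = P := by
  have hc i : 0 < c i := (ha i).trans (hac i)
  have hPstar' : Pstar = fun i => truncPower (a i) (c i) := funext₂ hPstar
  obtain ⟨i₀, hi₀⟩ := hwhat.1
  have hwhat_pos : 0 < what := hi₀ ▸ hw i₀ ▸ weight_pos (ha i₀) (hac i₀)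
  have hwhat_le : what ≤ chat := by
    have h4 : 4 * a i₀ < c i₀ := by
      have := hratio i₀
      rw [div_lt_iff₀ (hc i₀)] at this
      linarith
    calc what = w i₀ := hi₀.symm
      _ ≤ c i₀ := (hw i₀ ▸ weight_lt (ha i₀) h4).le
      _ ≤ chat := hchat.2 ⟨i₀, rfl⟩
  have hsub : Icc what chat ⊆ Ioi 0 := fun _ hk => hwhat_pos.trans_le hk.1
  have hcont : ContinuousOn (fun k => ∑ i, Pstar i k) (Icc what chat) := by
    rw [hPstar']
    exact (continuousOn_finsetSum _ fun i _ =>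
      continuousOn_truncPower (ha i).le (hc i)).mono hsub
  have hzero : ∑ i, Pstar i chat = 0 := by
    rw [hPstar']
    exact Finset.sum_eq_zero fun i _ => truncPower_of_le (hchat.2 ⟨i, rfl⟩)
  refine ⟨hcont, ?_, hzero, fun P hP => ?_⟩
  · rw [hPstar']
    exact (antitoneOn_finset_sum fun i _ => antitoneOn_truncPower (ha i).le (hc i)).mono hsub
  · rw [← hzero] at hP
    exact intermediate_value_Icc' hwhat_le hcont hP
end

section
/- Let 0 < a < d, 0 < b < c, P*, Q* ≥ 0 satisfy √(ac)(1+bP*) + √(bd)(1+aQ*) ≤ √(cd). Then there exist σ₁², σ₂² > 0 and ρ₁ = √(1 - aσ₂²), ρ₂ = √(1 - bσ₁²) with 0 ≤ ρ₁, ρ₂ ≤ 1 such that √c·ρ₁σ₁ = 1 + aQ* and √d·ρ₂σ₂ = 1 + bP*. -/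
lemma genie_aux (u v : ℝ) (hu : 0 < u) (hv : 0 < v) (huv : u + v ≤ 1) :
    ∃ x y : ℝ, 0 < x ∧ x ≤ 1 ∧ 0 < y ∧ y < 1 ∧
      x * (1 - y) = u ^ 2 ∧ y * (1 - x) = v ^ 2 := by
  set S := 1 - u ^ 2 + v ^ 2 with hS
  set D := S ^ 2 - 4 * v ^ 2 with hD
  have hS2v : 2 * v ≤ S := by nlinarith
  have hSpos : 0 < S := by linarith
  have hD0 : 0 ≤ D := by nlinarith
  have hsqD : Real.sqrt D ^ 2 = D := Real.sq_sqrt hD0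
  have hsqD0 := Real.sqrt_nonneg D
  set y := (S - Real.sqrt D) / 2 with hy
  have hDltS : Real.sqrt D < S := by
    have h2 : Real.sqrt D < Real.sqrt (S ^ 2) := Real.sqrt_lt_sqrt hD0 (by nlinarith)
    rwa [Real.sqrt_sq hSpos.le] at h2
  have hypos : 0 < y := by rw [hy]; linarith
  have hylev : y ≤ v := by
    have h1 : S - 2 * v ≤ Real.sqrt D := by
      have h2 := Real.sqrt_le_sqrt (show (S - 2*v) ^ 2 ≤ D by nlinarith)
      rwa [Real.sqrt_sq (by linarith)] at h2
    rw [hy]; linarith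
  have hy1 : y < 1 := by linarith
  have h1y : 0 < 1 - y := by linarith
  have hquad : y ^ 2 - S * y + v ^ 2 = 0 := by
    rw [hy]; linear_combination hsqD / 4 + hD / 4
  have hule : u ^ 2 ≤ 1 - y := by nlinarith
  refine ⟨u ^ 2 / (1 - y), y, by positivity, ?_, hypos, hy1, by field_simp, ?_⟩
  · rw [div_le_one h1y]; exact hule
  · have hne := ne_of_gt h1y
    rw [show (1 : ℝ) - u ^ 2 / (1 - y) = (1 - y - u ^ 2) / (1 - y) by field_simp]
    rw [← mul_div_assoc, div_eq_iff hne]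
    linear_combination -hquad - y * hS

/-- feasibility of the genie-noise parameters: there exist
variances σ₁², σ₂² > 0 and correlations ρ₁, ρ₂ ∈ [0,1] with
ρ₁² = 1 - aσ₂², ρ₂² = 1 - bσ₁², √c ρ₁σ₁ = 1 + aQ*, √d ρ₂σ₂ = 1 + bP*,
provided (P*,Q*) lies in the noisy-interference region. -/
theorem genie_params_feasible (a b c d Pstar Qstar : ℝ)
    (ha : 0 < a) (had : a < d) (hb : 0 < b) (hbc : b < c)
    (hP : 0 ≤ Pstar) (hQ : 0 ≤ Qstar)
    (hNI : Real.sqrt (a * c) * (1 + b * Pstar)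
      + Real.sqrt (b * d) * (1 + a * Qstar) ≤ Real.sqrt (c * d)) :
    ∃ s1 s2 r1 r2 : ℝ,
      0 < s1 ∧ 0 < s2 ∧
      0 ≤ r1 ∧ r1 ≤ 1 ∧ 0 ≤ r2 ∧ r2 ≤ 1 ∧
      r1 ^ 2 = 1 - a * s2 ∧ r2 ^ 2 = 1 - b * s1 ∧
      Real.sqrt c * r1 * Real.sqrt s1 = 1 + a * Qstar ∧
      Real.sqrt d * r2 * Real.sqrt s2 = 1 + b * Pstar := by
  have hc : (0:ℝ) < c := hb.trans hbc
  have hd : (0:ℝ) < d := ha.trans had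
  set A := 1 + a * Qstar with hAdef
  set B := 1 + b * Pstar with hBdef
  have hA1 : (1:ℝ) ≤ A := by
    have := mul_nonneg ha.le hQ; rw [hAdef]; linarith
  have hB1 : (1:ℝ) ≤ B := by
    have := mul_nonneg hb.le hP; rw [hBdef]; linarith
  have hsc : (0:ℝ) < Real.sqrt c := Real.sqrt_pos.mpr hc
  have hsd : (0:ℝ) < Real.sqrt d := Real.sqrt_pos.mpr hd
  have hsa : (0:ℝ) < Real.sqrt a := Real.sqrt_pos.mpr ha
  have hsb : (0:ℝ) < Real.sqrt b := Real.sqrt_pos.mpr hb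
  set u := Real.sqrt b * A / Real.sqrt c with hudef
  set v := Real.sqrt a * B / Real.sqrt d with hvdef
  have hu : 0 < u := by rw [hudef]; positivity
  have hv : 0 < v := by rw [hvdef]; positivity
  have hu2 : u ^ 2 = b * A ^ 2 / c := by
    rw [hudef, div_pow, mul_pow, Real.sq_sqrt hb.le, Real.sq_sqrt hc.le]
  have hv2 : v ^ 2 = a * B ^ 2 / d := by
    rw [hvdef, div_pow, mul_pow, Real.sq_sqrt ha.le, Real.sq_sqrt hd.le]
  have huv : u + v ≤ 1 := by
    rw [hudef, hvdef, div_add_div _ _ (ne_of_gt hsc) (ne_of_gt hsd),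
      div_le_one (by positivity)]
    calc Real.sqrt b * A * Real.sqrt d + Real.sqrt c * (Real.sqrt a * B)
        = Real.sqrt (a*c) * B + Real.sqrt (b*d) * A := by
          rw [Real.sqrt_mul ha.le, Real.sqrt_mul hb.le]; ring
      _ ≤ Real.sqrt (c*d) := hNI
      _ = Real.sqrt c * Real.sqrt d := Real.sqrt_mul hc.le d
  obtain ⟨x, y, hx0, hx1, hy0, hy1, hxy, hyx⟩ := genie_aux u v hu hv huv
  refine ⟨x / b, y / a, Real.sqrt (1 - y), Real.sqrt (1 - x), by positivity,
    by positivity, Real.sqrt_nonneg _, ?_, Real.sqrt_nonneg _, ?_, ?_, ?_, ?_, ?_⟩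
  · exact Real.sqrt_le_one.mpr (by linarith)
  · exact Real.sqrt_le_one.mpr (by linarith)
  · rw [Real.sq_sqrt (by linarith : (0:ℝ) ≤ 1 - y)]; field_simp
  · rw [Real.sq_sqrt (by linarith : (0:ℝ) ≤ 1 - x)]; field_simp
  · rw [← Real.sqrt_mul hc.le, ← Real.sqrt_mul (by nlinarith : (0:ℝ) ≤ c * (1-y))]
    rw [show c * (1 - y) * (x / b) = A ^ 2 by
      have h : c * (1 - y) * (x / b) = (x * (1-y)) * c / b := by
        field_simp
      rw [h, hxy, hu2]; field_simp]
    exact Real.sqrt_sq (by linarith)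
  · rw [← Real.sqrt_mul hd.le, ← Real.sqrt_mul (by nlinarith : (0:ℝ) ≤ d * (1-x))]
    rw [show d * (1 - x) * (y / a) = B ^ 2 by
      have h : d * (1 - x) * (y / a) = (y * (1-x)) * d / a := by
        field_simp
      rw [h, hyx, hv2]; field_simp]
    exact Real.sqrt_sq (by linarith)
end

section
/- Let 0 < a < c and define the per-subchannel symmetric sum-rate-with-interference-as-noise function F(p) = log(1 + cp/(1+ap)). Then for any k with w ≤ k ≤ c where w = 4a²/(√c-√a)², the unique p ≥ 0 with F'(p) = k is p = (√(c² + (4ac/k)(a+c)) - (2a+c))/(2a(a+c)), and this p lies in [0, (√(ac)-2a)/(2a²)]. -/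
/-!
Writing `D(p) = (1 + a p)(1 + a p + c p)`, the equation `F'(p) = c / D(p) = k` is the
quadratic `D(p) = c / k`, whose larger root is the stated formula; it is nonnegative because
`c / k ≥ 1 = D(0)`. Since `D` is strictly increasing on `p ≥ 0`, that root is the only
nonnegative solution, and the upper bound follows from
`D((√(ac) - 2a) / (2a²)) = c (√c - √a)² / (4a²) = c / w ≥ c / k`.
-/

open Set

/-- `F'(p) = c / marginalRateDen a c p`. -/
def marginalRateDen (a c p : ℝ) : ℝ := (1 + a * p) * (1 + a * p + c * p)

namespace marginalRateDen

variable {a c : ℝ}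

lemma pos (ha : 0 ≤ a) (hc : 0 ≤ c) {p : ℝ} (hp : 0 ≤ p) : 0 < marginalRateDen a c p := by
  unfold marginalRateDen; positivity

lemma strictMonoOn (ha : 0 < a) (hc : 0 ≤ c) : StrictMonoOn (marginalRateDen a c) (Ici 0) := by
  intro p hp q hq hpq
  have hp : 0 ≤ p := hp
  have hq : 0 ≤ q := hq
  unfold marginalRateDen
  have h1 : 1 + a * p < 1 + a * q := by gcongr
  have h2 : 1 + a * p + c * p ≤ 1 + a * q + c * q := by gcongr
  exact mul_lt_mul h1 h2 (by positivity) (by positivity)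

/-- The larger root of the quadratic `a (a + c) p² + (2a + c) p + 1 - q = 0`. -/
lemma eq_at_root (ha : a ≠ 0) (hac : a + c ≠ 0) {q : ℝ}
    (hq : 0 ≤ c ^ 2 + 4 * a * q * (a + c)) :
    marginalRateDen a c
      ((Real.sqrt (c ^ 2 + 4 * a * q * (a + c)) - (2 * a + c)) / (2 * a * (a + c))) = q := by
  have hS := Real.sq_sqrt hq
  set S := Real.sqrt (c ^ 2 + 4 * a * q * (a + c))
  unfold marginalRateDen
  field_simp
  linear_combination (a + c) * hS

lemma root_nonneg (ha : 0 < a) (hc : 0 ≤ c) {q : ℝ} (hq : 1 ≤ q) :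
    0 ≤ (Real.sqrt (c ^ 2 + 4 * a * q * (a + c)) - (2 * a + c)) / (2 * a * (a + c)) := by
  have hroot : 2 * a + c ≤ Real.sqrt (c ^ 2 + 4 * a * q * (a + c)) :=
    Real.le_sqrt_of_sq_le <| by
      nlinarith [mul_nonneg (mul_nonneg ha.le (add_nonneg ha.le hc)) (sub_nonneg.2 hq)]
  exact div_nonneg (sub_nonneg.2 hroot) (by positivity)

lemma eq_at_threshold (ha : 0 < a) (hc : 0 ≤ c) :
    marginalRateDen a c ((Real.sqrt (a * c) - 2 * a) / (2 * a ^ 2))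
      = c * (Real.sqrt c - Real.sqrt a) ^ 2 / (4 * a ^ 2) := by
  have hs := Real.sq_sqrt ha.le
  have ht := Real.sq_sqrt hc
  have hs0 : Real.sqrt a ≠ 0 := (Real.sqrt_pos.2 ha).ne'
  rw [Real.sqrt_mul ha.le, marginalRateDen]
  set s := Real.sqrt a
  set t := Real.sqrt c
  rw [← hs, ← ht]
  field_simp
  ring

end marginalRateDen

lemma four_mul_le_of_div_sqrt_sub_sq_le {a c : ℝ} (ha : 0 ≤ a) (hac : a < c)
    (h : 4 * a ^ 2 / (Real.sqrt c - Real.sqrt a) ^ 2 ≤ c) : 4 * a ≤ c := by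
  have hs := Real.sq_sqrt ha
  have ht := Real.sq_sqrt (ha.trans hac.le)
  have hst : Real.sqrt a < Real.sqrt c := Real.sqrt_lt_sqrt ha hac
  set s := Real.sqrt a
  set t := Real.sqrt c
  have hs0 : 0 ≤ s := Real.sqrt_nonneg a
  rw [div_le_iff₀ (by nlinarith), ← hs, ← ht] at h
  have h2 : 2 * s ^ 2 ≤ t * (t - s) :=
    (pow_le_pow_iff_left₀ (by positivity) (by nlinarith) two_ne_zero).1 (by linarith)
  have h3 : 2 * s ≤ t := by nlinarith
  nlinarith

/-- for w ≤ k ≤ c with w = 4a²/(√c-√a)², the unique p ≥ 0 with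
F'(p) = c/((1+ap)(1+ap+cp)) = k is the explicit formula, and it lies in the
symmetric noisy-interference power range [0, (√(ac)-2a)/(2a²)]. -/
theorem marginal_rate_inverse (a c k : ℝ) (ha : 0 < a) (hac : a < c)
    (hk1 : 4 * a ^ 2 / (Real.sqrt c - Real.sqrt a) ^ 2 ≤ k) (hk2 : k ≤ c) :
    let p0 := (Real.sqrt (c ^ 2 + (4 * a * c / k) * (a + c)) - (2 * a + c))
      / (2 * a * (a + c));
    p0 ∈ Icc (0 : ℝ) ((Real.sqrt (a * c) - 2 * a) / (2 * a ^ 2)) ∧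
    c / ((1 + a * p0) * (1 + a * p0 + c * p0)) = k ∧
    ∀ p : ℝ, 0 ≤ p → c / ((1 + a * p) * (1 + a * p + c * p)) = k → p = p0 := by
  intro p0
  have hc : 0 < c := ha.trans hac
  have hw : 0 < 4 * a ^ 2 / (Real.sqrt c - Real.sqrt a) ^ 2 :=
    div_pos (by positivity) (pow_pos (sub_pos.2 (Real.sqrt_lt_sqrt ha.le hac)) 2)
  have hk : 0 < k := hw.trans_le hk1
  have hp0 : p0 =
      (Real.sqrt (c ^ 2 + 4 * a * (c / k) * (a + c)) - (2 * a + c)) / (2 * a * (a + c)) := by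
    simp only [p0, mul_div_assoc]
  have hroot : marginalRateDen a c p0 = c / k := by
    rw [hp0]; exact marginalRateDen.eq_at_root ha.ne' (by positivity) (by positivity)
  have hp0_nonneg : 0 ≤ p0 :=
    hp0 ▸ marginalRateDen.root_nonneg ha hc.le ((one_le_div hk).2 hk2)
  have hmax_nonneg : 0 ≤ (Real.sqrt (a * c) - 2 * a) / (2 * a ^ 2) := by
    have h4ac := four_mul_le_of_div_sqrt_sub_sq_le ha.le hac (hk1.trans hk2)
    refine div_nonneg (sub_nonneg.2 (Real.le_sqrt_of_sq_le ?_)) (by positivity)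
    nlinarith
  have hmono := marginalRateDen.strictMonoOn ha hc.le
  refine ⟨⟨hp0_nonneg, ?_⟩, ?_, ?_⟩
  · rw [← hmono.le_iff_le hp0_nonneg hmax_nonneg, hroot,
      marginalRateDen.eq_at_threshold ha hc.le, ← div_div_eq_mul_div]
    exact div_le_div_of_nonneg_left hc.le hw hk1
  · change c / marginalRateDen a c p0 = k
    rw [hroot]
    field_simp
  · intro p hp (hpk : c / marginalRateDen a c p = k)
    have hpos := marginalRateDen.pos ha.le hc.le hp
    refine hmono.injOn hp hp0_nonneg ?_
    rw [hroot, ← hpk]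
    field_simp
end
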